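/- Let θ ∈ (0,1), c > 0, k₀ ∈ ℝ, and let Z : [k₀,∞) → [0,∞) be continuous with Z(k) → 0 as k → ∞. Suppose 0 < ω < (1−θ)·(θ/c)^{θ/(1−θ)} and Z(k)^θ ≤ ω + c·Z(k) for every k ≥ k₀. Then there exists Z⁻ with 0 < Z⁻ < (θ/c)^{1/(1−θ)}, satisfying (Z⁻)^θ = ω + c·Z⁻, such that Z(k) ≤ Z⁻ for every k ≥ k₀. -/

import Mathlib

/-!
The function `f x = x ^ θ - c * x` vanishes at `0` and takes the value
`(1 - θ) * (θ / c) ^ (θ / (1 - θ)) > ω` at `Z* = (θ / c) ^ (1 / (1 - θ))`, so it has a last crossing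
`Z⁻ ∈ (0, Z*)` of the level `ω`, beyond which `f > ω` on `(Z⁻, Z*]`. The hypothesis says
`f (Z k) ≤ ω`, so `Z` never takes a value in `(Z⁻, Z*]`; since `Z` is continuous and eventually
below `Z⁻`, the intermediate value theorem forbids it from ever exceeding `Z⁻`.
-/

open Set Filter

section ContinuityArgument

variable {α δ : Type*} [ConditionallyCompleteLinearOrder α] [TopologicalSpace α] [OrderTopology α]
  [DenselyOrdered α] [LinearOrder δ] [TopologicalSpace δ] [OrderClosedTopology δ]

theorem exists_last_eq_of_continuousOn_Icc {f : α → δ} {a b : α} {ω : δ} (hab : a ≤ b)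
    (hf : ContinuousOn f (Icc a b)) (ha : f a ≤ ω) (hb : ω < f b) :
    ∃ m ∈ Ico a b, f m = ω ∧ ∀ x ∈ Ioc m b, ω < f x := by
  set S := Icc a b ∩ f ⁻¹' {ω}
  have hS : IsCompact S :=
    isCompact_Icc.of_isClosed_subset (hf.preimage_isClosed_of_isClosed isClosed_Icc
      isClosed_singleton) inter_subset_left
  have hS_ne : S.Nonempty := intermediate_value_Icc hab hf ⟨ha, hb.le⟩
  obtain ⟨⟨ham, hmb⟩, hfm⟩ := hS.sSup_mem hS_ne
  refine ⟨sSup S, ⟨ham, hmb.lt_of_ne fun h => hb.ne' (h ▸ hfm)⟩, hfm, fun x hx => ?_⟩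
  by_contra! hfx
  -- a crossing of `ω` in `[x, b]` would lie in `S` beyond its supremum
  obtain ⟨y, hy, hfy⟩ := intermediate_value_Icc hx.2 (hf.mono (Icc_subset_Icc_left
    (ham.trans hx.1.le))) ⟨hfx, hb.le⟩
  exact (le_csSup hS.bddAbove ⟨⟨ham.trans (hx.1.le.trans hy.1), hy.2⟩, hfy⟩).not_gt
    (hx.1.trans_le hy.1)

theorem ContinuousOn.le_of_eventually_le_of_forall_notMem_Ioc {Z : α → δ} {k₀ : α} {a b : δ}
    (hab : a < b) (hZ : ContinuousOn Z (Ici k₀)) (hlim : ∀ᶠ k in atTop, Z k ≤ a)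
    (hgap : ∀ k, k₀ ≤ k → Z k ∉ Ioc a b) {k : α} (hk : k₀ ≤ k) : Z k ≤ a := by
  by_contra! hZk
  obtain ⟨k', hZk', hkk'⟩ := (hlim.and (eventually_ge_atTop k)).exists
  obtain ⟨j, hj, hZj⟩ := intermediate_value_Icc' hkk' (hZ.mono fun x hx => hk.trans hx.1)
    (⟨hZk'.trans (le_min hZk.le hab.le), min_le_left _ _⟩ : min (Z k) b ∈ Icc (Z k') (Z k))
  exact hgap j (hk.trans hj.1) (hZj ▸ ⟨lt_min hZk hab, min_le_right _ _⟩)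

end ContinuityArgument

theorem Real.rpow_sub_mul_at_critical_point {θ c : ℝ} (hθ : 0 < θ) (hc : 0 < c) (hθ1 : θ ≠ 1) :
    ((θ / c) ^ (1 / (1 - θ))) ^ θ - c * (θ / c) ^ (1 / (1 - θ)) =
      (1 - θ) * (θ / c) ^ (θ / (1 - θ)) := by
  have hθc : 0 < θ / c := div_pos hθ hc
  have h1θ : 1 - θ ≠ 0 := sub_ne_zero.mpr hθ1.symm
  have hpow : ((θ / c) ^ (1 / (1 - θ))) ^ θ = (θ / c) ^ (θ / (1 - θ)) := by
    rw [← Real.rpow_mul hθc.le, one_div_mul_eq_div]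
  have hmul : c * (θ / c) ^ (1 / (1 - θ)) = θ * (θ / c) ^ (θ / (1 - θ)) := by
    rw [show 1 / (1 - θ) = 1 + θ / (1 - θ) by field_simp; ring, Real.rpow_add hθc,
      Real.rpow_one, ← mul_assoc, mul_div_cancel₀ θ hc.ne']
  rw [hpow, hmul]
  ring

theorem stmt10_general (θ c ω k₀ : ℝ) (hθ : θ ∈ Set.Ioo (0 : ℝ) 1) (hc : 0 < c)
    (Z : ℝ → ℝ)
    (hZcont : ContinuousOn Z (Set.Ici k₀))
    (hZlim : Filter.Tendsto Z Filter.atTop (nhds 0))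
    (hω : 0 < ω) (hωsmall : ω < (1 - θ) * (θ / c) ^ (θ / (1 - θ)))
    (hineq : ∀ k, k₀ ≤ k → (Z k) ^ θ ≤ ω + c * Z k) :
    ∃ Zm : ℝ, 0 < Zm ∧ Zm < (θ / c) ^ (1 / (1 - θ)) ∧
      Zm ^ θ = ω + c * Zm ∧ ∀ k, k₀ ≤ k → Z k ≤ Zm := by
  obtain ⟨hθ0, hθ1⟩ := hθ
  set f : ℝ → ℝ := fun x => x ^ θ - c * x
  have hf : Continuous f :=
    (Real.continuous_rpow_const hθ0.le).sub (continuous_const.mul continuous_id)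
  have hf0 : f 0 = 0 := by simp [f, Real.zero_rpow hθ0.ne']
  have hfmax : ω < f ((θ / c) ^ (1 / (1 - θ))) := by
    change ω < _ - _
    rwa [Real.rpow_sub_mul_at_critical_point hθ0 hc hθ1.ne]
  obtain ⟨Zm, ⟨hZm0, hZm_lt⟩, hfZm, hgap⟩ :=
    exists_last_eq_of_continuousOn_Icc (by positivity) hf.continuousOn (hf0 ▸ hω.le) hfmax
  have hZm_pos : 0 < Zm := hZm0.lt_of_ne <| by
    rintro rfl
    exact hω.ne (hf0 ▸ hfZm)
  refine ⟨Zm, hZm_pos, hZm_lt, by linarith [show f Zm = ω from hfZm], fun k hk => ?_⟩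
  refine hZcont.le_of_eventually_le_of_forall_notMem_Ioc hZm_lt
    (hZlim.eventually_le_const hZm_pos) (fun j hj hZj => ?_) hk
  linarith [hgap (Z j) hZj, hineq j hj]

/-- Continuity argument for maximal regularity: a continuous `Z ≥ 0` vanishing at
infinity and satisfying `Z^θ ≤ ω + cZ` with `ω` below the critical threshold stays
below the smaller root `Z⁻` of `Z^θ = ω + cZ`. -/
theorem stmt10 (θ c ω k₀ : ℝ) (hθ : θ ∈ Set.Ioo (0 : ℝ) 1) (hc : 0 < c)
    (Z : ℝ → ℝ)
    (hZcont : ContinuousOn Z (Set.Ici k₀))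
    (hZnn : ∀ k, k₀ ≤ k → 0 ≤ Z k)
    (hZlim : Filter.Tendsto Z Filter.atTop (nhds 0))
    (hω : 0 < ω) (hωsmall : ω < (1 - θ) * (θ / c) ^ (θ / (1 - θ)))
    (hineq : ∀ k, k₀ ≤ k → (Z k) ^ θ ≤ ω + c * Z k) :
    ∃ Zm : ℝ, 0 < Zm ∧ Zm < (θ / c) ^ (1 / (1 - θ)) ∧
      Zm ^ θ = ω + c * Zm ∧ ∀ k, k₀ ≤ k → Z k ≤ Zm :=
  stmt10_general θ c ω k₀ hθ hc Z hZcont hZlim hω hωsmall hineq
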